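/- arXiv:hep-th/9902189 — 5 statements merged into one kernel-verified Lean document; each statement's English description precedes it below -/
import Mathlib

section
/- Let m > 0 and let f : ℝ × ℝ → ℂ be twice continuously differentiable, and set g(r,t) = (1+e^r)^{1/2} f(r,t). Then f satisfies the black-hole wave equation e^{−r} ∂_r((1+e^r) ∂_r f) − (e^{−r}+1) ∂_t² f = (m² − 1/4) f on ℝ × ℝ if and only if g satisfies the Schrödinger-form equation ∂_t² g(r,t) = ∂_r² g(r,t) − V(r) g(r,t) on ℝ × ℝ. -/
/-!
With `σ(r) = √(1 + e^r)` and `g = σ f`, the Leibniz rule gives `∂_r² g = σ'' f + 2σ' ∂_r f + σ ∂_r² f`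
and `∂_t² g = σ ∂_t² f`. Since `σ'/σ = e^r/(2(1+e^r))` and `σ''/σ = e^r(2+e^r)/(4(1+e^r)^2)`,
the potential is exactly what turns `σ''` into `V σ - (m² - 1/4) e^r/(1+e^r) σ`. Both equations then
become nonzero multiples of the same expression
`e^r ∂_r f + (1+e^r)(∂_r² f - ∂_t² f) - (m² - 1/4) e^r f`: the wave equation with factor `e^{-r}`,
the Schrödinger form with factor `σ/(1+e^r)`.
-/

open Real Complex

/-- The potential `V(r) = e^r/(4(1+e^r)^2) + m^2 e^r/(1+e^r)`. -/
noncomputable def blackHolePotential (m : ℝ) (r : ℝ) : ℝ :=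
  Real.exp r / (4 * (1 + Real.exp r) ^ 2) + m ^ 2 * Real.exp r / (1 + Real.exp r)

theorem deriv_deriv_smul {𝕜 F : Type*} [NontriviallyNormedField 𝕜] [NormedAddCommGroup F]
    [NormedSpace 𝕜 F] {a : 𝕜 → 𝕜} {u : 𝕜 → F} (ha : ContDiff 𝕜 2 a) (hu : ContDiff 𝕜 2 u)
    (x : 𝕜) :
    deriv (deriv fun y => a y • u y) x
      = deriv (deriv a) x • u x + (2 * deriv a x) • deriv u x + a x • deriv (deriv u) x := by
  have ha' : Differentiable 𝕜 a := ha.differentiable two_ne_zero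
  have hu' : Differentiable 𝕜 u := hu.differentiable two_ne_zero
  have ha'' : Differentiable 𝕜 (deriv a) := (ha.deriv' (n := 1)).differentiable one_ne_zero
  have hu'' : Differentiable 𝕜 (deriv u) := (hu.deriv' (n := 1)).differentiable one_ne_zero
  have h : deriv (fun y => a y • u y) = fun y => a y • deriv u y + deriv a y • u y :=
    funext fun y => deriv_fun_smul (ha' y) (hu' y)
  rw [h, (((ha' x).hasDerivAt.fun_smul (hu'' x).hasDerivAt).fun_add
    ((ha'' x).hasDerivAt.fun_smul (hu' x).hasDerivAt)).deriv]
  module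

theorem contDiff_sqrt_one_add_exp : ContDiff ℝ 2 fun y => √(1 + rexp y) :=
  (contDiff_const.add Real.contDiff_exp).sqrt fun x => by positivity

theorem hasDerivAt_sqrt_one_add_exp (x : ℝ) :
    HasDerivAt (fun y => √(1 + rexp y)) (rexp x / (2 * √(1 + rexp x))) x :=
  ((Real.hasDerivAt_exp x).const_add 1).sqrt (by positivity)

theorem deriv_deriv_sqrt_one_add_exp (x : ℝ) :
    deriv (deriv fun y => √(1 + rexp y)) x
      = rexp x * (2 + rexp x) / (4 * (1 + rexp x) ^ 2) * √(1 + rexp x) := by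
  have hS2 : √(1 + rexp x) ^ 2 = 1 + rexp x := sq_sqrt (by positivity)
  have hS4 : √(1 + rexp x) ^ 4 = (1 + rexp x) ^ 2 := by
    linear_combination (√(1 + rexp x) ^ 2 + 1 + rexp x) * hS2
  rw [funext fun y => (hasDerivAt_sqrt_one_add_exp y).deriv,
    ((Real.hasDerivAt_exp x).fun_div ((hasDerivAt_sqrt_one_add_exp x).const_mul 2)
      (by positivity)).deriv]
  field_simp
  rw [hS4, hS2]
  ring

/-- Here `e, S, F, D₁, D₂, T` stand for `e^r, √(1 + e^r), f, ∂_r f, ∂_r² f, ∂_t² f` at `(r, t)`. -/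
theorem waveEq_iff_schrodinger_of_sq_eq {m e S : ℝ} (he : 0 < e) (hS : S ^ 2 = 1 + e)
    (F D₁ D₂ T : ℂ) :
    ((e⁻¹ : ℝ) : ℂ) * (((1 + e : ℝ) : ℂ) * D₂ + (e : ℂ) * D₁) - ((e⁻¹ + 1 : ℝ) : ℂ) * T
        = ((m ^ 2 - 1 / 4 : ℝ) : ℂ) * F
      ↔ (S : ℂ) * T = ((e * (2 + e) / (4 * (1 + e) ^ 2) * S : ℝ) : ℂ) * F
          + ((2 * (e / (2 * S)) : ℝ) : ℂ) * D₁ + (S : ℂ) * D₂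
          - ((e / (4 * (1 + e) ^ 2) + m ^ 2 * e / (1 + e) : ℝ) : ℂ) * ((S : ℂ) * F) := by
  have he0 : (e : ℂ) ≠ 0 := by exact_mod_cast he.ne'
  have h1e : (1 + e : ℂ) ≠ 0 := by exact_mod_cast (by positivity : 1 + e ≠ 0)
  have hS0 : (S : ℂ) ≠ 0 := by
    rintro h
    rw [Complex.ofReal_eq_zero] at h
    subst h
    nlinarith
  have hSC : (S : ℂ) ^ 2 = 1 + e := by exact_mod_cast hS
  set B : ℂ := e * D₁ + (1 + e) * (D₂ - T) - e * (m ^ 2 - 1 / 4) * F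
  have hwave : ((e⁻¹ : ℝ) : ℂ) * (((1 + e : ℝ) : ℂ) * D₂ + (e : ℂ) * D₁)
        - ((e⁻¹ + 1 : ℝ) : ℂ) * T - ((m ^ 2 - 1 / 4 : ℝ) : ℂ) * F = (e : ℂ)⁻¹ * B := by
    push_cast
    field_simp
    ring
  have hschr : (S : ℂ) * T - (((e * (2 + e) / (4 * (1 + e) ^ 2) * S : ℝ) : ℂ) * F
        + ((2 * (e / (2 * S)) : ℝ) : ℂ) * D₁ + (S : ℂ) * D₂
        - ((e / (4 * (1 + e) ^ 2) + m ^ 2 * e / (1 + e) : ℝ) : ℂ) * ((S : ℂ) * F))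
      = -(S / (1 + e)) * B := by
    push_cast
    field_simp
    linear_combination (4 * e * (1 + e) * D₁ : ℂ) * hSC
  rw [← sub_eq_zero, hwave, ← sub_eq_zero (a := (S : ℂ) * T), hschr]
  simp [he0, hS0, h1e]

theorem blackHole_waveEq_iff_schrodingerForm_general (m : ℝ)
    (f : ℝ × ℝ → ℂ) (hf : ContDiff ℝ 2 f)
    (g : ℝ × ℝ → ℂ)
    (hg : ∀ r t : ℝ, g (r, t) = (Real.sqrt (1 + Real.exp r) : ℂ) * f (r, t)) :
    (∀ r t : ℝ,
        (Real.exp (-r) : ℂ) *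
            deriv (fun x : ℝ => ((1 + Real.exp x : ℝ) : ℂ) *
              deriv (fun y : ℝ => f (y, t)) x) r
          - ((Real.exp (-r) + 1 : ℝ) : ℂ) *
              deriv (fun s : ℝ => deriv (fun s' : ℝ => f (r, s')) s) t
        = ((m ^ 2 - 1 / 4 : ℝ) : ℂ) * f (r, t))
    ↔ (∀ r t : ℝ,
        deriv (fun s : ℝ => deriv (fun s' : ℝ => g (r, s')) s) t
        = deriv (fun x : ℝ => deriv (fun y : ℝ => g (y, t)) x) r
          - (blackHolePotential m r : ℂ) * g (r, t)) := by
  refine forall_congr' fun r => forall_congr' fun t => ?_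
  have hu : ContDiff ℝ 2 fun y => f (y, t) := hf.comp (contDiff_id.prodMk contDiff_const)
  have hgr : (fun y => g (y, t)) = fun y => √(1 + rexp y) • f (y, t) :=
    funext fun y => by rw [hg, Complex.real_smul]
  have hgt : (fun s => g (r, s)) = fun s => (√(1 + rexp r) : ℂ) * f (r, s) := funext (hg r)
  have hwave : deriv (fun x => ((1 + rexp x : ℝ) : ℂ) * deriv (fun y => f (y, t)) x) r
      = ((1 + rexp r : ℝ) : ℂ) * deriv (deriv fun y => f (y, t)) r
        + (rexp r : ℂ) * deriv (fun y => f (y, t)) r := by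
    simpa only [Complex.real_smul, ((Real.hasDerivAt_exp r).const_add 1).deriv] using
      deriv_fun_smul ((Real.hasDerivAt_exp r).const_add 1).differentiableAt
        ((hu.deriv' (n := 1)).differentiable one_ne_zero r)
  rw [hwave, hgr, hgt, deriv_const_mul_field', deriv_const_mul_field',
    deriv_deriv_smul contDiff_sqrt_one_add_exp hu, deriv_deriv_sqrt_one_add_exp,
    (hasDerivAt_sqrt_one_add_exp r).deriv, hg, Real.exp_neg]
  simp only [Complex.real_smul]
  exact waveEq_iff_schrodinger_of_sq_eq (exp_pos r) (sq_sqrt (by positivity)) _ _ _ _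

/-- `f` satisfies the black-hole wave equation
`e^{−r} ∂_r((1+e^r) ∂_r f) − (e^{−r}+1) ∂_t² f = (m² − 1/4) f`
iff `g = (1+e^r)^{1/2} f` satisfies `∂_t² g = ∂_r² g − V g`. -/
theorem blackHole_waveEq_iff_schrodingerForm (m : ℝ) (hm : 0 < m)
    (f : ℝ × ℝ → ℂ) (hf : ContDiff ℝ 2 f)
    (g : ℝ × ℝ → ℂ)
    (hg : ∀ r t : ℝ, g (r, t) = (Real.sqrt (1 + Real.exp r) : ℂ) * f (r, t)) :
    (∀ r t : ℝ,
        (Real.exp (-r) : ℂ) *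
            deriv (fun x : ℝ => ((1 + Real.exp x : ℝ) : ℂ) *
              deriv (fun y : ℝ => f (y, t)) x) r
          - ((Real.exp (-r) + 1 : ℝ) : ℂ) *
              deriv (fun s : ℝ => deriv (fun s' : ℝ => f (r, s')) s) t
        = ((m ^ 2 - 1 / 4 : ℝ) : ℂ) * f (r, t))
    ↔ (∀ r t : ℝ,
        deriv (fun s : ℝ => deriv (fun s' : ℝ => g (r, s')) s) t
        = deriv (fun x : ℝ => deriv (fun y : ℝ => g (y, t)) x) r
          - (blackHolePotential m r : ℂ) * g (r, t)) :=
  blackHole_waveEq_iff_schrodingerForm_general m f hf g hg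
end

section
/- Let m > 0 and k > 0 and ω = √(k² + m²). The transmission amplitude T_k = Γ(1/2−i(k+ω))² / (Γ(−2iω) Γ(1−2ik)) satisfies |T_k|² = (ω/k) · sinh(2πk) sinh(2πω) / cosh²(π(k+ω)). -/
/-!
Euler's reflection formula `Γ(z) Γ(1 - z) = π / sin (π z)` together with `Γ(conj z) = conj Γ(z)`
computes `|Γ|²` in closed form on vertical lines: on `Re z = 1/2` the two factors are conjugate,
giving `|Γ(1/2 + iy)|² = π / cosh (π y)`; on `Re z = 0` the recursion `Γ(z + 1) = z Γ(z)`
turns `Γ(1 - iy)` into `-iy · conj Γ(iy)`, giving `|Γ(iy)|² = π / (y sinh (π y))` and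
`|Γ(1 + iy)|² = π y / sinh (π y)`. These are the three Gamma factors of `T_k`.
-/

open Real Complex

/-- `ω = √(k² + m²)`. -/
noncomputable def bhOmega (m k : ℝ) : ℝ := Real.sqrt (k ^ 2 + m ^ 2)

/-- The transmission amplitude `T_k = Γ(1/2−i(k+ω))² / (Γ(−2iω) Γ(1−2ik))`. -/
noncomputable def bhT (m k : ℝ) : ℂ :=
  Complex.Gamma (1 / 2 - Complex.I * ((k : ℂ) + (bhOmega m k : ℂ))) ^ 2 /
    (Complex.Gamma (-(2 * Complex.I * (bhOmega m k : ℂ))) *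
      Complex.Gamma (1 - 2 * Complex.I * (k : ℂ)))

open ComplexConjugate

namespace Complex

lemma norm_sq_Gamma_of_conj_eq_one_sub {z : ℂ} (hz : conj z = 1 - z) :
    ((‖Gamma z‖ ^ 2 : ℝ) : ℂ) = π / sin (π * z) := by
  rw [ofReal_pow, ← mul_conj', ← Gamma_conj, hz, Gamma_mul_Gamma_one_sub]

lemma norm_sq_Gamma_one_half_add_mul_I (y : ℝ) :
    ‖Gamma (1 / 2 + y * I)‖ ^ 2 = π / Real.cosh (π * y) := by
  have hconj : conj (1 / 2 + y * I) = 1 - (1 / 2 + y * I) := by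
    apply Complex.ext <;> norm_num
  have hsin : sin (π * (1 / 2 + y * I)) = Real.cosh (π * y) := by
    rw [show (π : ℂ) * (1 / 2 + y * I) = (π * y : ℝ) * I + π / 2 by push_cast; ring,
      sin_add_pi_div_two, cos_mul_I, ofReal_cosh]
  have h := norm_sq_Gamma_of_conj_eq_one_sub hconj
  rw [hsin] at h
  exact_mod_cast h

lemma norm_sq_Gamma_mul_I (y : ℝ) :
    ‖Gamma (y * I)‖ ^ 2 = π / (y * Real.sinh (π * y)) := by
  rcases eq_or_ne y 0 with rfl | hy
  · simp
  have hyI : -(y * I) ≠ 0 := by simp [hy]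
  have hreflect := Gamma_mul_Gamma_one_sub (y * I)
  have hconj : Gamma (-(y * I)) = conj (Gamma (y * I)) := by rw [← Gamma_conj]; simp
  rw [show (1 : ℂ) - y * I = -(y * I) + 1 by ring, Gamma_add_one _ hyI, hconj,
    show (π : ℂ) * (y * I) = (π * y : ℝ) * I by push_cast; ring, sin_mul_I, ← ofReal_sinh] at hreflect
  have hsinh : (Real.sinh (π * y) : ℂ) ≠ 0 :=
    ofReal_ne_zero.mpr (by simp [Real.pi_ne_zero, hy])
  rw [eq_div_iff (mul_ne_zero hsinh I_ne_zero)] at hreflect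
  have : ((‖Gamma (y * I)‖ ^ 2 : ℝ) : ℂ) = π / (y * Real.sinh (π * y)) := by
    rw [ofReal_pow, ← mul_conj', eq_div_iff (mul_ne_zero (ofReal_ne_zero.mpr hy) hsinh)]
    linear_combination hreflect +
      y * Real.sinh (π * y) * Gamma (y * I) * conj (Gamma (y * I)) * I_sq
  exact_mod_cast this

lemma norm_sq_Gamma_one_add_mul_I {y : ℝ} (hy : y ≠ 0) :
    ‖Gamma (1 + y * I)‖ ^ 2 = π * y / Real.sinh (π * y) := by
  rw [add_comm, Gamma_add_one _ (by simp [hy]), norm_mul, mul_pow, norm_sq_Gamma_mul_I]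
  have hsinh : Real.sinh (π * y) ≠ 0 := by simp [Real.pi_ne_zero, hy]
  simp only [norm_mul, norm_real, Real.norm_eq_abs, norm_I, mul_one, sq_abs]
  field_simp

end Complex

theorem bhT_abs_sq_general (m k : ℝ) (hk : 0 < k) :
    ‖bhT m k‖ ^ 2
      = (bhOmega m k / k) *
          (Real.sinh (2 * π * k) * Real.sinh (2 * π * bhOmega m k) /
            Real.cosh (π * (k + bhOmega m k)) ^ 2) := by
  rw [bhT, norm_div, norm_mul, norm_pow, div_pow, mul_pow]
  set ω := bhOmega m k
  have hω : 0 < ω := hk.trans_le ((le_abs_self k).trans (Real.abs_le_sqrt (le_add_of_nonneg_right (sq_nonneg m))))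
  have hΓ₁ : ‖Gamma (1 / 2 - I * (k + ω))‖ ^ 2 = π / Real.cosh (π * (k + ω)) := by
    rw [show 1 / 2 - I * (k + ω) = 1 / 2 + ((-(k + ω) : ℝ) : ℂ) * I by push_cast; ring,
      Complex.norm_sq_Gamma_one_half_add_mul_I, mul_neg, Real.cosh_neg]
  have hΓ₂ : ‖Gamma (-(2 * I * ω))‖ ^ 2 = π / (2 * ω * Real.sinh (2 * π * ω)) := by
    rw [show -(2 * I * ω) = ((-(2 * ω) : ℝ) : ℂ) * I by push_cast; ring,
      Complex.norm_sq_Gamma_mul_I, mul_neg, Real.sinh_neg]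
    ring_nf
  have hΓ₃ : ‖Gamma (1 - 2 * I * k)‖ ^ 2 = 2 * π * k / Real.sinh (2 * π * k) := by
    rw [show 1 - 2 * I * k = 1 + ((-(2 * k) : ℝ) : ℂ) * I by push_cast; ring,
      Complex.norm_sq_Gamma_one_add_mul_I (by linarith), mul_neg, Real.sinh_neg]
    ring_nf
  rw [hΓ₁, hΓ₂, hΓ₃]
  have hsinh_k : 0 < Real.sinh (2 * π * k) := Real.sinh_pos_iff.mpr (by positivity)
  have hsinh_ω : 0 < Real.sinh (2 * π * ω) := Real.sinh_pos_iff.mpr (by positivity)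
  field_simp

/-- `|T_k|² = (ω/k)·sinh(2πk) sinh(2πω)/cosh²(π(k+ω))`. -/
theorem bhT_abs_sq (m k : ℝ) (hm : 0 < m) (hk : 0 < k) :
    ‖bhT m k‖ ^ 2
      = (bhOmega m k / k) *
          (Real.sinh (2 * π * k) * Real.sinh (2 * π * bhOmega m k) /
            Real.cosh (π * (k + bhOmega m k)) ^ 2) :=
  bhT_abs_sq_general m k hk
end

section
/- Let m > 0. The Schrödinger operator −d²/dr² + V has no square-integrable eigenfunctions: for every λ ∈ ℂ, every twice continuously differentiable f : ℝ → ℂ satisfying −f''(r) + V(r) f(r) = λ f(r) for all r ∈ ℝ and ∫_ℝ |f(r)|² dr < ∞ is identically zero. -/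
open Real Complex MeasureTheory

/-!
Write `u = ‖f‖²`. Since `V` is bounded, `(Re f̄ f')' = ‖f'‖² + (V - Re λ) u` forces
`f' ∈ L²`: otherwise `u' = 2 Re f̄ f'` would tend to `+∞` and `u` could not be integrable.
Then `f̄ f'` and its derivative `‖f'‖² + (V - λ) u` are both integrable, so the latter has
integral zero, i.e. `λ ∫ u = ∫ ‖f'‖² + ∫ V u`; as `V > 0`, a nonzero `f` forces `λ = a > 0`.
Finally the energy `E = a u + ‖f'‖²` satisfies `E' = 2 V Re f̄ f' ≤ (V / √a) E`, and `V` is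
integrable near `-∞`, so by Grönwall `E` stays above a positive constant as `r → -∞`,
contradicting integrability.
-/

open Filter Set
open scoped ComplexConjugate InnerProductSpace

theorem not_integrableOn_of_le {α : Type*} [MeasurableSpace α] {μ : Measure α} {s : Set α}
    {g : α → ℝ} {δ : ℝ} (hs : MeasurableSet s) (hμs : μ s = ⊤) (hδ : 0 < δ)
    (hg : ∀ x ∈ s, δ ≤ g x) : ¬IntegrableOn g s μ := by
  intro hg_int
  have hδ_int : IntegrableOn (fun _ ↦ δ) s μ := by
    refine hg_int.mono' aestronglyMeasurable_const ?_
    filter_upwards [ae_restrict_mem hs] with x hx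
    rw [Real.norm_of_nonneg hδ.le]
    exact hg x hx
  simp [integrableOn_const_iff, hδ.ne', hμs] at hδ_int

theorem integrableOn_Ioi_of_hasDerivAt_of_hasDerivAt_add {u u' q r : ℝ → ℝ} {a : ℝ}
    (hu : ∀ x, HasDerivAt u (u' x) x) (hu' : ∀ x, HasDerivAt u' (q x + r x) x)
    (hq_cont : Continuous q) (hq : 0 ≤ q) (hr : IntegrableOn r (Ioi a))
    (hu_int : IntegrableOn u (Ioi a)) : IntegrableOn q (Ioi a) := by
  by_contra hq_int
  have hr_bound : ∀ b, a ≤ b → -∫ x in Ioi a, |r x| ≤ ∫ x in a..b, r x := by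
    intro b hab
    rw [intervalIntegral.integral_of_le hab]
    have h_abs : |∫ x in Ioc a b, r x| ≤ ∫ x in Ioc a b, |r x| :=
      abs_integral_le_integral_abs
    have h_mono : ∫ x in Ioc a b, |r x| ≤ ∫ x in Ioi a, |r x| :=
      setIntegral_mono_set hr.abs (ae_of_all _ fun x ↦ abs_nonneg _)
        Ioc_subset_Ioi_self.eventuallyLE
    linarith [neg_abs_le (∫ x in Ioc a b, r x)]
  obtain ⟨b₀, hab₀, hb₀⟩ :
      ∃ b₀, a ≤ b₀ ∧ 1 - u' a + ∫ x in Ioi a, |r x| < ∫ x in a..b₀, q x := by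
    by_contra! h
    refine hq_int (integrableOn_Ioi_of_intervalIntegral_norm_bounded
      (1 - u' a + ∫ x in Ioi a, |r x|) a
      (fun _ ↦ hq_cont.integrableOn_Ioc) tendsto_id ?_)
    filter_upwards [eventually_ge_atTop a] with b hb
    simpa [Real.norm_of_nonneg (hq _)] using h b hb
  have hu'_ge : ∀ b ∈ Ici b₀, 1 ≤ u' b := by
    intro b hb
    have hab : a ≤ b := hab₀.trans hb
    have hr_ii : IntervalIntegrable r volume a b :=
      (intervalIntegrable_iff_integrableOn_Ioc_of_le hab).2 (hr.mono_set Ioc_subset_Ioi_self)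
    have hq_ii : ∀ c, IntervalIntegrable q volume a c := hq_cont.intervalIntegrable a
    have hftc : u' b - u' a = (∫ x in a..b, q x) + ∫ x in a..b, r x := by
      rw [← intervalIntegral.integral_add (hq_ii b) hr_ii,
        intervalIntegral.integral_eq_sub_of_hasDerivAt (fun x _ ↦ hu' x) ((hq_ii b).add hr_ii)]
    have hq_mono : ∫ x in a..b₀, q x ≤ ∫ x in a..b, q x := by
      rw [← intervalIntegral.integral_add_adjacent_intervals (hq_ii b₀)
        (hq_cont.intervalIntegrable b₀ b)]
      linarith [intervalIntegral.integral_nonneg (μ := volume) hb fun x _ ↦ hq x]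
    linarith [hr_bound b hab]
  have hu_ge : ∀ y ∈ Ici b₀, 1 * (y - b₀) ≤ u y - u b₀ := fun y hy ↦
    (convex_Ici b₀).mul_sub_le_image_sub_of_le_deriv
      (fun x _ ↦ (hu x).continuousAt.continuousWithinAt)
      (fun x _ ↦ (hu x).differentiableAt.differentiableWithinAt)
      (fun x hx ↦ (hu x).deriv ▸ hu'_ge x (interior_subset hx)) b₀ self_mem_Ici y hy hy
  have hc : a < max (b₀ + 1) (b₀ + 1 - u b₀) :=
    by linarith [le_max_left (b₀ + 1) (b₀ + 1 - u b₀)]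
  refine not_integrableOn_of_le measurableSet_Ici Real.volume_Ici one_pos (fun y hy ↦ ?_)
    (hu_int.mono_set (Ici_subset_Ioi.2 hc))
  have hy' := max_le_iff.1 (mem_Ici.1 hy)
  linarith [hu_ge y (mem_Ici.2 (by linarith))]

theorem integrable_of_hasDerivAt_of_hasDerivAt_add {u u' q r : ℝ → ℝ}
    (hu : ∀ x, HasDerivAt u (u' x) x) (hu' : ∀ x, HasDerivAt u' (q x + r x) x)
    (hq_cont : Continuous q) (hq : 0 ≤ q) (hr : Integrable r) (hu_int : Integrable u) :
    Integrable q := by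
  have h_right : IntegrableOn q (Ioi 0) :=
    integrableOn_Ioi_of_hasDerivAt_of_hasDerivAt_add hu hu' hq_cont hq hr.integrableOn
      hu_int.integrableOn
  have h_left : IntegrableOn (q ∘ Neg.neg) (Neg.neg ⁻¹' Iic 0) := by
    rw [neg_preimage, neg_Iic, neg_zero,
      integrableOn_Ici_iff_integrableOn_Ioi (f := q ∘ Neg.neg)]
    refine integrableOn_Ioi_of_hasDerivAt_of_hasDerivAt_add (u := fun x ↦ u (-x))
      (u' := fun x ↦ -u' (-x)) (r := fun x ↦ r (-x)) (fun x ↦ ?_) (fun x ↦ ?_)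
      (hq_cont.comp continuous_neg) (fun x ↦ hq (-x)) hr.comp_neg.integrableOn
      hu_int.comp_neg.integrableOn
    · simpa [Function.comp_def] using (hu (-x)).comp x (hasDerivAt_neg' x)
    · simpa [Function.comp_def] using (hu' (-x)).neg.comp x (hasDerivAt_neg' x)
  rw [(Measure.measurePreserving_neg volume).integrableOn_comp_preimage
    (Homeomorph.neg ℝ).measurableEmbedding] at h_left
  rw [← integrableOn_univ, ← Iic_union_Ioi (a := (0 : ℝ))]
  exact h_left.union h_right

theorem le_mul_exp_integral_of_hasDerivAt_of_le {E E' k : ℝ → ℝ}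
    (hE : ∀ x, HasDerivAt E (E' x) x) (hk : Continuous k) (hE' : ∀ x, E' x ≤ k x * E x)
    {x y : ℝ} (hxy : x ≤ y) : E y ≤ E x * Real.exp (∫ t in x..y, k t) := by
  set K := fun t ↦ ∫ s in x..t, k s
  have hK : ∀ t, HasDerivAt K (k t) t := fun t ↦
    intervalIntegral.integral_hasDerivAt_right (hk.intervalIntegrable _ _)
      hk.aestronglyMeasurable.stronglyMeasurableAtFilter hk.continuousAt
  have hH : ∀ t, HasDerivAt (fun t ↦ E t * Real.exp (-K t))
      ((E' t - k t * E t) * Real.exp (-K t)) t :=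
    fun t ↦ ((hE t).mul (hK t).neg.exp).congr_deriv (by simp only [Pi.neg_apply]; ring)
  have hH_anti : Antitone (fun t ↦ E t * Real.exp (-K t)) :=
    antitone_of_deriv_nonpos (fun t ↦ (hH t).differentiableAt) fun t ↦ by
      rw [(hH t).deriv]
      exact mul_nonpos_of_nonpos_of_nonneg (by linarith [hE' t]) (Real.exp_pos _).le
  have h := hH_anti hxy
  simp only [K, intervalIntegral.integral_same, neg_zero, Real.exp_zero, mul_one] at h
  calc E y = E y * Real.exp (-K y) * Real.exp (K y) := by rw [mul_assoc, ← Real.exp_add]; simp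
    _ ≤ E x * Real.exp (K y) := by gcongr

section Schrodinger

variable {V : ℝ → ℝ} {lam : ℂ} {f f' : ℝ → ℂ}

theorem hasDerivAt_conj_mul_deriv (hf : ∀ x, HasDerivAt f (f' x) x)
    (hf' : ∀ x, HasDerivAt f' ((V x - lam) * f x) x) (x : ℝ) :
    HasDerivAt (fun x ↦ conj (f x) * f' x)
      ((‖f' x‖ ^ 2 + V x * ‖f x‖ ^ 2 : ℝ) - lam * (‖f x‖ ^ 2 : ℝ)) x := by
  refine ((hf x).star.mul (hf' x)).congr_deriv ?_
  simp only [star_def]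
  push_cast
  linear_combination conj_mul' (f' x) + (V x - lam) * conj_mul' (f x)

theorem hasDerivAt_mul_norm_sq_add_norm_sq {a : ℝ} (hf : ∀ x, HasDerivAt f (f' x) x)
    (hf' : ∀ x, HasDerivAt f' ((V x - a) * f x) x) (x : ℝ) :
    HasDerivAt (fun x ↦ a * ‖f x‖ ^ 2 + ‖f' x‖ ^ 2) (2 * V x * ⟪f x, f' x⟫_ℝ) x := by
  refine (((hf x).norm_sq.const_mul a).add (hf' x).norm_sq).congr_deriv ?_
  rw [← ofReal_sub, ← real_smul, real_inner_smul_right, real_inner_comm]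
  ring

theorem integrable_norm_deriv_sq {C : ℝ} (hV : Continuous V) (hV_bdd : ∀ x, |V x| ≤ C)
    (hf : ∀ x, HasDerivAt f (f' x) x) (hf' : ∀ x, HasDerivAt f' ((V x - lam) * f x) x)
    (hf_int : Integrable fun x ↦ ‖f x‖ ^ 2) : Integrable fun x ↦ ‖f' x‖ ^ 2 := by
  have hf_cont : Continuous f := continuous_iff_continuousAt.2 fun x ↦ (hf x).continuousAt
  have hf'_cont : Continuous f' := continuous_iff_continuousAt.2 fun x ↦ (hf' x).continuousAt
  have hu' : ∀ x, HasDerivAt (fun x ↦ ⟪f x, f' x⟫_ℝ)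
      (‖f' x‖ ^ 2 + ⟪f x, (V x - lam) * f x⟫_ℝ) x := fun x ↦
    ((hf x).inner ℝ (hf' x)).congr_deriv (by rw [real_inner_self_eq_norm_sq, add_comm])
  refine integrable_of_hasDerivAt_of_hasDerivAt_add (u := fun x ↦ ‖f x‖ ^ 2 / 2)
    (fun x ↦ ((hf x).norm_sq.div_const 2).congr_deriv (by ring)) hu' (by fun_prop)
    (fun x ↦ sq_nonneg _) ?_ (hf_int.div_const 2)
  refine (hf_int.const_mul (C + ‖lam‖)).mono' (by fun_prop) (ae_of_all _ fun x ↦ ?_)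
  calc ‖⟪f x, (V x - lam) * f x⟫_ℝ‖ ≤ ‖f x‖ * ‖(V x - lam) * f x‖ := by
        rw [Real.norm_eq_abs]; exact abs_real_inner_le_norm _ _
    _ = ‖(V x : ℂ) - lam‖ * ‖f x‖ ^ 2 := by rw [norm_mul]; ring
    _ ≤ (C + ‖lam‖) * ‖f x‖ ^ 2 := by
        gcongr
        refine (norm_sub_le _ _).trans ?_
        rw [norm_real, Real.norm_eq_abs]
        linarith [hV_bdd x]

theorem mul_integral_norm_sq_eq {C : ℝ} (hV : Continuous V) (hV_bdd : ∀ x, |V x| ≤ C)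
    (hf : ∀ x, HasDerivAt f (f' x) x) (hf' : ∀ x, HasDerivAt f' ((V x - lam) * f x) x)
    (hf_int : Integrable fun x ↦ ‖f x‖ ^ 2) :
    lam * (∫ x, ‖f x‖ ^ 2 : ℝ) = (∫ x, (‖f' x‖ ^ 2 + V x * ‖f x‖ ^ 2) : ℝ) := by
  have hf_cont : Continuous f := continuous_iff_continuousAt.2 fun x ↦ (hf x).continuousAt
  have hf'_cont : Continuous f' := continuous_iff_continuousAt.2 fun x ↦ (hf' x).continuousAt
  have hf'_int := integrable_norm_deriv_sq hV hV_bdd hf hf' hf_int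
  have hVf_int : Integrable fun x ↦ V x * ‖f x‖ ^ 2 :=
    hf_int.bdd_mul hV.aestronglyMeasurable
      (ae_of_all _ fun x ↦ (norm_eq_abs _).trans_le (hV_bdd x))
  have hG_int : Integrable fun x ↦ conj (f x) * f' x := by
    refine ((hf_int.add hf'_int).div_const 2).mono' (by fun_prop) (ae_of_all _ fun x ↦ ?_)
    rw [norm_mul, RCLike.norm_conj, Pi.add_apply]
    nlinarith [sq_nonneg (‖f x‖ - ‖f' x‖)]
  have hQVU_int : Integrable fun x ↦ ((‖f' x‖ ^ 2 + V x * ‖f x‖ ^ 2 : ℝ) : ℂ) :=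
    (hf'_int.add hVf_int).ofReal
  have hU_int : Integrable fun x ↦ lam * ((‖f x‖ ^ 2 : ℝ) : ℂ) := hf_int.ofReal.const_mul lam
  have h := integral_eq_zero_of_hasDerivAt_of_integrable
    (hasDerivAt_conj_mul_deriv hf hf') (hQVU_int.sub hU_int) hG_int
  rw [integral_sub hQVU_int hU_int, integral_const_mul, integral_complex_ofReal,
    integral_complex_ofReal] at h
  linear_combination -h

theorem exists_pos_eq_ofReal_of_ne_zero {C : ℝ} (hV : Continuous V) (hV_pos : ∀ x, 0 < V x)
    (hV_bdd : ∀ x, |V x| ≤ C) (hf : ∀ x, HasDerivAt f (f' x) x)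
    (hf' : ∀ x, HasDerivAt f' ((V x - lam) * f x) x) (hf_int : Integrable fun x ↦ ‖f x‖ ^ 2)
    {x₀ : ℝ} (hx₀ : f x₀ ≠ 0) : ∃ a : ℝ, 0 < a ∧ lam = a := by
  have hf_cont : Continuous f := continuous_iff_continuousAt.2 fun x ↦ (hf x).continuousAt
  have hf'_int := integrable_norm_deriv_sq hV hV_bdd hf hf' hf_int
  have hVf_int : Integrable fun x ↦ V x * ‖f x‖ ^ 2 :=
    hf_int.bdd_mul hV.aestronglyMeasurable
      (ae_of_all _ fun x ↦ (norm_eq_abs _).trans_le (hV_bdd x))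
  have hU_pos : 0 < ∫ x, ‖f x‖ ^ 2 := integral_pos_of_integrable_nonneg_nonzero (by fun_prop)
    hf_int (fun x ↦ sq_nonneg _) (x := x₀) (by positivity)
  have hVU_pos : 0 < ∫ x, V x * ‖f x‖ ^ 2 := integral_pos_of_integrable_nonneg_nonzero
    (by fun_prop) hVf_int (fun x ↦ mul_nonneg (hV_pos x).le (sq_nonneg _)) (x := x₀)
    (mul_pos (hV_pos x₀) (by positivity)).ne'
  have hQ_nonneg : 0 ≤ ∫ x, ‖f' x‖ ^ 2 := integral_nonneg fun x ↦ sq_nonneg _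
  have h := mul_integral_norm_sq_eq hV hV_bdd hf hf' hf_int
  rw [integral_add hf'_int hVf_int] at h
  have h_re := congrArg re h
  have h_im := congrArg im h
  simp only [mul_re, mul_im, ofReal_re, ofReal_im, mul_zero, sub_zero] at h_re h_im
  refine ⟨lam.re, ?_, Complex.ext (by simp) ?_⟩
  · nlinarith
  · simpa [hU_pos.ne'] using h_im

theorem eq_zero_of_integrableOn_Iic {a b : ℝ} (hV : Continuous V) (hV_nonneg : ∀ x, 0 ≤ V x)
    (ha : 0 < a) (hf : ∀ x, HasDerivAt f (f' x) x)
    (hf' : ∀ x, HasDerivAt f' ((V x - a) * f x) x) (hV_int : IntegrableOn V (Iic b))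
    (hE_int : IntegrableOn (fun x ↦ a * ‖f x‖ ^ 2 + ‖f' x‖ ^ 2) (Iic b)) : f b = 0 := by
  set E := fun x ↦ a * ‖f x‖ ^ 2 + ‖f' x‖ ^ 2
  set s := √a
  have hs : 0 < s := sqrt_pos.2 ha
  set K := ∫ t in Iic b, V t
  have hE_le : ∀ x, 2 * V x * ⟪f x, f' x⟫_ℝ ≤ V x / s * E x := fun x ↦ by
    have h_amgm : 2 * s * (‖f x‖ * ‖f' x‖) ≤ E x := by
      show _ ≤ a * _ + _
      rw [← sq_sqrt ha.le]
      nlinarith [sq_nonneg (s * ‖f x‖ - ‖f' x‖)]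
    calc 2 * V x * ⟪f x, f' x⟫_ℝ ≤ 2 * V x * (‖f x‖ * ‖f' x‖) := by
          gcongr
          · linarith [hV_nonneg x]
          · exact real_inner_le_norm _ _
      _ = V x / s * (2 * s * (‖f x‖ * ‖f' x‖)) := by field_simp
      _ ≤ V x / s * E x := by gcongr; exact div_nonneg (hV_nonneg x) hs.le
  have hV_le : ∀ x ≤ b, ∫ t in x..b, V t / s ≤ K / s := fun x hx ↦ by
    rw [intervalIntegral.integral_div, intervalIntegral.integral_of_le hx]
    gcongr
    exact setIntegral_mono_set hV_int (ae_of_all _ hV_nonneg) Ioc_subset_Iic_self.eventuallyLE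
  by_contra hfb
  have hEb : 0 < E b := by positivity
  refine not_integrableOn_of_le measurableSet_Iic Real.volume_Iic
    (mul_pos hEb (Real.exp_pos (-(K / s)))) (fun x hx ↦ ?_) hE_int
  have h := le_mul_exp_integral_of_hasDerivAt_of_le
    (hasDerivAt_mul_norm_sq_add_norm_sq hf hf') (hV.div_const s) hE_le hx
  calc E b * Real.exp (-(K / s))
        ≤ E x * Real.exp (∫ t in x..b, V t / s) * Real.exp (-(K / s)) := by gcongr
    _ ≤ E x * Real.exp (K / s) * Real.exp (-(K / s)) := by
        gcongr
        exact hV_le x hx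
    _ = E x := by rw [mul_assoc, ← Real.exp_add]; simp

end Schrodinger

theorem continuous_blackHolePotential (m : ℝ) : Continuous (blackHolePotential m) := by
  unfold blackHolePotential
  have h : ∀ r, 1 + Real.exp r ≠ 0 := fun r ↦ by positivity
  fun_prop (disch := simp [h])

theorem blackHolePotential_pos (m r : ℝ) : 0 < blackHolePotential m r := by
  unfold blackHolePotential
  positivity

theorem blackHolePotential_le (m r : ℝ) :
    blackHolePotential m r ≤ (1 / 4 + m ^ 2) * min 1 (Real.exp r) := by
  unfold blackHolePotential
  have h1 : Real.exp r / (4 * (1 + Real.exp r) ^ 2) ≤ 1 / 4 * min 1 (Real.exp r) := by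
    rw [div_le_iff₀ (by positivity)]
    rcases min_cases 1 (Real.exp r) with ⟨h, h'⟩ | ⟨h, h'⟩ <;> rw [h] <;>
      nlinarith [Real.exp_pos r, pow_pos (Real.exp_pos r) 2, pow_pos (Real.exp_pos r) 3]
  have h2 : m ^ 2 * Real.exp r / (1 + Real.exp r) ≤ m ^ 2 * min 1 (Real.exp r) := by
    rw [div_le_iff₀ (by positivity)]
    rcases min_cases 1 (Real.exp r) with ⟨h, h'⟩ | ⟨h, h'⟩ <;> rw [h] <;>
      nlinarith [Real.exp_pos r, sq_nonneg m, mul_nonneg (sq_nonneg m) (Real.exp_pos r).le]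
  linarith

theorem abs_blackHolePotential_le (m r : ℝ) : |blackHolePotential m r| ≤ 1 / 4 + m ^ 2 := by
  rw [abs_of_pos (blackHolePotential_pos m r)]
  nlinarith [blackHolePotential_le m r, min_le_left 1 (Real.exp r)]

theorem integrableOn_blackHolePotential_Iic (m b : ℝ) :
    IntegrableOn (blackHolePotential m) (Iic b) := by
  refine ((integrableOn_exp_Iic b).const_mul (1 / 4 + m ^ 2)).mono'
    (continuous_blackHolePotential m).aestronglyMeasurable
    ((ae_restrict_mem measurableSet_Iic).mono fun r _ ↦ ?_)
  rw [Real.norm_of_nonneg (blackHolePotential_pos m r).le]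
  nlinarith [blackHolePotential_le m r, min_le_right 1 (Real.exp r)]

theorem bh_no_L2_eigenfunctions_general (m : ℝ) (lam : ℂ) (f : ℝ → ℂ)
    (hf : ContDiff ℝ 2 f)
    (heq : ∀ r : ℝ,
      -(deriv (deriv f) r) + (blackHolePotential m r : ℂ) * f r = lam * f r)
    (hL2 : Integrable (fun r : ℝ => ‖f r‖ ^ 2) volume) :
    ∀ r : ℝ, f r = 0 := by
  have hV := continuous_blackHolePotential m
  have hV_pos := blackHolePotential_pos m
  have hf_deriv : ∀ r, HasDerivAt f (deriv f r) r := fun r ↦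
    (hf.differentiable two_ne_zero r).hasDerivAt
  have hf'_deriv : ∀ r, HasDerivAt (deriv f) ((blackHolePotential m r - lam) * f r) r := by
    intro r
    have h := ((contDiff_succ_iff_deriv.mp hf).2.2.differentiable one_ne_zero r).hasDerivAt
    rwa [show deriv (deriv f) r = (blackHolePotential m r - lam) * f r by
      linear_combination -heq r] at h
  have hf'_int :=
    integrable_norm_deriv_sq hV (abs_blackHolePotential_le m) hf_deriv hf'_deriv hL2
  intro r
  by_contra hr
  obtain ⟨a, ha, rfl⟩ := exists_pos_eq_ofReal_of_ne_zero hV hV_pos (abs_blackHolePotential_le m)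
    hf_deriv hf'_deriv hL2 hr
  exact hr (eq_zero_of_integrableOn_Iic hV (fun r ↦ (hV_pos r).le) ha hf_deriv hf'_deriv
    (integrableOn_blackHolePotential_Iic m r) ((hL2.const_mul a).add hf'_int).integrableOn)

/-- the Schrödinger operator `−d²/dr² + V` has no square-integrable
eigenfunctions. -/
theorem bh_no_L2_eigenfunctions (m : ℝ) (hm : 0 < m) (lam : ℂ) (f : ℝ → ℂ)
    (hf : ContDiff ℝ 2 f)
    (heq : ∀ r : ℝ,
      -(deriv (deriv f) r) + (blackHolePotential m r : ℂ) * f r = lam * f r)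
    (hL2 : Integrable (fun r : ℝ => ‖f r‖ ^ 2) volume) :
    ∀ r : ℝ, f r = 0 :=
  bh_no_L2_eigenfunctions_general m lam f hf heq hL2
end

section
/- Let m > 0 and k > 0, and note that a + b = c = 1 − 2iω. The mode functions develop only a logarithmic singularity at the black-hole singularity uv = 1: the function x ↦ F(a,b;a+b;x) + (Γ(a+b)/(Γ(a)Γ(b))) · log(1−x) is bounded on the interval [0,1). -/
/-!
For `c = a + b` put `u n = (n + 1) f (n + 1)`, where `f n` are the coefficients of `F(a,b;c;·)`.
Then `u (n + 1) = u n (1 + ab / ((n + 1)(c + n + 1)))`, and the perturbations are `O(1/n²)` when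
`Re c ≥ 0`. Hence `u` is bounded and converges at rate `O(1/n)`; by Gauss's product formula for `Γ`
its limit is `K = Γ(c) / (Γ(a) Γ(b))`. So `f n = K / n + O(1/n²)`, and subtracting
`K ∑ zⁿ / n = -K log (1 - z)` leaves an absolutely convergent series, bounded on the unit disc.
-/

open Real Complex

noncomputable def gaussHyp (a b c z : ℂ) : ℂ :=
  ∑' n : ℕ, (ascPochhammer ℂ n).eval a * (ascPochhammer ℂ n).eval b /
      ((ascPochhammer ℂ n).eval c * (n.factorial : ℂ)) * z ^ n

open Filter Topology

section Telescoping

variable {w : ℕ → ℝ}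

theorem norm_le_mul_exp_of_eq_mul_one_add {R : Type*} [NormedRing R] [NormOneClass R]
    {u t : ℕ → R} (hu : ∀ n, u (n + 1) = u n * (1 + t n))
    (ht : ∀ n, ‖t n‖ ≤ w n - w (n + 1)) (n : ℕ) :
    ‖u n‖ ≤ ‖u 0‖ * Real.exp (w 0 - w n) := by
  induction n with
  | zero => simp
  | succ n ih =>
    have h_one_add : ‖1 + t n‖ ≤ Real.exp (w n - w (n + 1)) :=
      calc ‖1 + t n‖ ≤ 1 + ‖t n‖ := (norm_add_le _ _).trans_eq (by rw [norm_one])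
        _ ≤ w n - w (n + 1) + 1 := by linarith [ht n]
        _ ≤ Real.exp (w n - w (n + 1)) := Real.add_one_le_exp _
    calc ‖u (n + 1)‖ ≤ ‖u n‖ * ‖1 + t n‖ := hu n ▸ norm_mul_le _ _
      _ ≤ ‖u 0‖ * Real.exp (w 0 - w n) * Real.exp (w n - w (n + 1)) := by gcongr
      _ = ‖u 0‖ * Real.exp (w 0 - w (n + 1)) := by rw [mul_assoc, ← Real.exp_add]; ring_nf

theorem norm_sub_le_of_norm_sub_succ_le {E : Type*} [SeminormedAddCommGroup E] {u : ℕ → E}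
    {L : E} {l : ℝ} (hu : ∀ n, ‖u (n + 1) - u n‖ ≤ w n - w (n + 1))
    (huL : Tendsto u atTop (𝓝 L)) (hwl : Tendsto w atTop (𝓝 l)) (n : ℕ) :
    ‖L - u n‖ ≤ w n - l := by
  have h_partial : ∀ m, ‖u (m + n) - u n‖ ≤ w n - w (m + n) := by
    intro m
    induction m with
    | zero => simp
    | succ m ih =>
      rw [add_right_comm]
      linarith [norm_sub_le_norm_sub_add_norm_sub (u (m + n + 1)) (u (m + n)) (u n), hu (m + n)]
  have hshift := tendsto_add_atTop_nat n
  exact le_of_tendsto_of_tendsto' (((huL.comp hshift).sub_const (u n)).norm)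
    (tendsto_const_nhds.sub (hwl.comp hshift)) h_partial

end Telescoping

theorem norm_tsum_mul_pow_add_mul_log_le {f : ℕ → ℂ} {K : ℂ} {D : ℝ}
    (hf : ∀ n : ℕ, ‖((n : ℂ) + 1) * f (n + 1) - K‖ ≤ D / ((n : ℝ) + 1)) {z : ℂ} (hz : ‖z‖ < 1) :
    ‖∑' n, f n * z ^ n + K * Complex.log (1 - z)‖ ≤
      ‖f 0‖ + D * ∑' n : ℕ, 1 / ((n : ℝ) + 1) ^ 2 := by
  set g : ℕ → ℂ := fun n => (((n : ℂ) + 1) * f (n + 1) - K) / ((n : ℂ) + 1) * z ^ (n + 1)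
  have hg : ∀ n, ‖g n‖ ≤ D * (1 / ((n : ℝ) + 1) ^ 2) := by
    intro n
    have hn : ‖(n : ℂ) + 1‖ = (n : ℝ) + 1 := by exact_mod_cast Complex.norm_natCast (n + 1)
    have hzn : ‖z ^ (n + 1)‖ ≤ 1 := by rw [norm_pow]; exact pow_le_one₀ (norm_nonneg z) hz.le
    have hD : 0 ≤ D := by simpa using (norm_nonneg _).trans (hf 0)
    calc ‖g n‖ = ‖((n : ℂ) + 1) * f (n + 1) - K‖ / ((n : ℝ) + 1) * ‖z ^ (n + 1)‖ := by
          simp only [g, norm_mul, norm_div, hn]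
      _ ≤ D / ((n : ℝ) + 1) / ((n : ℝ) + 1) * 1 := by gcongr; exact hf n
      _ = D * (1 / ((n : ℝ) + 1) ^ 2) := by field_simp
  have hsum : Summable fun n : ℕ => D * (1 / ((n : ℝ) + 1) ^ 2) := by
    refine Summable.mul_left D ?_
    exact_mod_cast (summable_nat_add_iff 1).2 (Real.summable_one_div_nat_pow.2 one_lt_two)
  have hg_summable : Summable g := .of_norm_bounded hsum hg
  have htail : HasSum (fun n => f (n + 1) * z ^ (n + 1))
      (∑' n, g n - K * Complex.log (1 - z)) := by
    convert hg_summable.hasSum.add ((hasSum_taylorSeries_neg_log' hz).mul_left K) using 1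
    · funext n
      have hn : (n : ℂ) + 1 ≠ 0 := by exact_mod_cast n.succ_ne_zero
      simp only [g]
      field_simp
      ring
    · ring
  have hF : ∑' n, f n * z ^ n + K * Complex.log (1 - z) = f 0 + ∑' n, g n := by
    rw [(HasSum.zero_add (f := fun n => f n * z ^ n) htail).tsum_eq, pow_zero, mul_one]; ring
  rw [hF]
  calc ‖f 0 + ∑' n, g n‖ ≤ ‖f 0‖ + ∑' n, ‖g n‖ :=
        (norm_add_le _ _).trans (add_le_add le_rfl (norm_tsum_le_tsum_norm hg_summable.norm))
    _ ≤ ‖f 0‖ + ∑' n : ℕ, D * (1 / ((n : ℝ) + 1) ^ 2) :=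
        add_le_add le_rfl (hg_summable.norm.tsum_le_tsum hg hsum)
    _ = ‖f 0‖ + D * ∑' n : ℕ, 1 / ((n : ℝ) + 1) ^ 2 := by rw [tsum_mul_left]

theorem ascPochhammer_eval_eq_prod_range {R : Type*} [CommSemiring R] (r : R) (n : ℕ) :
    (ascPochhammer R n).eval r = ∏ j ∈ Finset.range n, (r + j) := by
  induction n with
  | zero => simp
  | succ n ih => rw [ascPochhammer_succ_eval, Finset.prod_range_succ, ih]

theorem ascPochhammer_eval_ne_zero {R : Type*} [CommRing R] [IsDomain R] {r : R}
    (hr : ∀ m : ℕ, r ≠ -m) (n : ℕ) : (ascPochhammer R n).eval r ≠ 0 := by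
  rw [Ne, ascPochhammer_eval_eq_zero_iff]
  rintro ⟨k, -, hk⟩
  exact hr k (by rw [hk, neg_neg])

theorem Complex.ne_neg_natCast_of_re_pos {z : ℂ} (hz : 0 < z.re) (m : ℕ) : z ≠ -m := by
  rintro rfl
  simp only [neg_re, natCast_re, Left.neg_pos_iff] at hz
  exact hz.not_ge m.cast_nonneg

theorem ordinaryHypergeometricCoefficient_succ {𝕂 : Type*} [Field 𝕂] (a b c : 𝕂) (n : ℕ) :
    ordinaryHypergeometricCoefficient a b c (n + 1) =
      ordinaryHypergeometricCoefficient a b c n * ((a + n) * (b + n) / ((c + n) * (n + 1))) := by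
  simp only [ordinaryHypergeometricCoefficient, ascPochhammer_succ_eval, Nat.factorial_succ,
    Nat.cast_mul, Nat.cast_succ, div_eq_mul_inv, mul_inv]
  ring

theorem gaussHyp_eq_tsum (a b c z : ℂ) :
    gaussHyp a b c z = ∑' n, ordinaryHypergeometricCoefficient a b c n * z ^ n :=
  tsum_congr fun n => by ring

noncomputable def scaledHypCoeff (a b c : ℂ) (n : ℕ) : ℂ :=
  ((n : ℂ) + 1) * ordinaryHypergeometricCoefficient a b c (n + 1)

section ZeroBalanced

variable {a b : ℂ}

theorem scaledHypCoeff_succ (hab : 0 ≤ (a + b).re) (n : ℕ) :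
    scaledHypCoeff a b (a + b) (n + 1) =
      scaledHypCoeff a b (a + b) n * (1 + a * b / (((n : ℂ) + 1) * (a + b + (n + 1)))) := by
  have hn : (n : ℂ) + 1 ≠ 0 := by exact_mod_cast n.succ_ne_zero
  have hn' : (n : ℂ) + 1 + 1 ≠ 0 := by exact_mod_cast (n + 1).succ_ne_zero
  have habn : a + b + (n + 1) ≠ 0 := by
    intro h
    have := congrArg re h
    simp only [add_re, natCast_re, one_re, zero_re] at this hab
    linarith [n.cast_nonneg (α := ℝ)]
  simp only [scaledHypCoeff]
  rw [ordinaryHypergeometricCoefficient_succ _ _ _ (n + 1)]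
  push_cast
  field_simp
  ring

theorem norm_mul_div_succ_mul_add_succ_le (hab : 0 ≤ (a + b).re) (n : ℕ) :
    ‖a * b / (((n : ℂ) + 1) * (a + b + (n + 1)))‖ ≤
      2 * ‖a * b‖ / ((n : ℝ) + 1) - 2 * ‖a * b‖ / (((n + 1 : ℕ) : ℝ) + 1) := by
  have hn : ‖(n : ℂ) + 1‖ = (n : ℝ) + 1 := by exact_mod_cast Complex.norm_natCast (n + 1)
  have hre : (n : ℝ) + 1 ≤ ‖a + b + (n + 1)‖ :=
    le_trans (by simp only [add_re, natCast_re, one_re] at hab ⊢; linarith) (Complex.re_le_norm _)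
  calc ‖a * b / (((n : ℂ) + 1) * (a + b + (n + 1)))‖
      ≤ ‖a * b‖ / (((n : ℝ) + 1) * ((n : ℝ) + 1)) := by
        rw [norm_div, norm_mul ((n : ℂ) + 1), hn]; gcongr
    _ ≤ 2 * ‖a * b‖ / ((n : ℝ) + 1) - 2 * ‖a * b‖ / (((n + 1 : ℕ) : ℝ) + 1) := by
        push_cast
        rw [div_sub_div _ _ (by positivity) (by positivity),
          div_le_div_iff₀ (by positivity) (by positivity)]
        nlinarith [mul_nonneg (mul_nonneg (norm_nonneg (a * b)) (n.cast_nonneg (α := ℝ)))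
          (by positivity : (0 : ℝ) ≤ (n : ℝ) + 1)]

theorem tendsto_scaledHypCoeff (ha : ∀ m : ℕ, a ≠ -m) (hb : ∀ m : ℕ, b ≠ -m) :
    Tendsto (scaledHypCoeff a b (a + b)) atTop
      (𝓝 (Complex.Gamma (a + b) / (Complex.Gamma a * Complex.Gamma b))) := by
  refine ((GammaSeq_tendsto_Gamma (a + b)).div
    ((GammaSeq_tendsto_Gamma a).mul (GammaSeq_tendsto_Gamma b))
    (mul_ne_zero (Gamma_ne_zero ha) (Gamma_ne_zero hb))).congr' ?_
  -- Gauss's product `Γ(s) = lim nˢ n! / (s)ₙ₊₁`; the powers `nᵃ⁺ᵇ = nᵃ nᵇ` cancel.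
  filter_upwards [eventually_ne_atTop 0] with n hn
  have hn' : (n : ℂ) ≠ 0 := Nat.cast_ne_zero.2 hn
  have hpa := ascPochhammer_eval_ne_zero ha (n + 1)
  have hpb := ascPochhammer_eval_ne_zero hb (n + 1)
  have hfac : (n.factorial : ℂ) ≠ 0 := Nat.cast_ne_zero.2 n.factorial_ne_zero
  have hna : (n : ℂ) ^ a ≠ 0 := by simp [cpow_eq_zero_iff, hn']
  have hnb : (n : ℂ) ^ b ≠ 0 := by simp [cpow_eq_zero_iff, hn']
  simp only [Pi.div_apply, Complex.GammaSeq, ← ascPochhammer_eval_eq_prod_range,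
    cpow_add _ _ hn', scaledHypCoeff, ordinaryHypergeometricCoefficient, Nat.factorial_succ]
  push_cast
  field_simp

theorem exists_norm_scaledHypCoeff_sub_le (ha : ∀ m : ℕ, a ≠ -m) (hb : ∀ m : ℕ, b ≠ -m)
    (hab : 0 ≤ (a + b).re) :
    ∃ D : ℝ, ∀ n : ℕ, ‖scaledHypCoeff a b (a + b) n -
      Complex.Gamma (a + b) / (Complex.Gamma a * Complex.Gamma b)‖ ≤ D / ((n : ℝ) + 1) := by
  set u := scaledHypCoeff a b (a + b)
  set w : ℕ → ℝ := fun n => 2 * ‖a * b‖ / ((n : ℝ) + 1)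
  set B := ‖u 0‖ * Real.exp (w 0)
  have hu : ∀ n, u (n + 1) = u n * (1 + a * b / (((n : ℂ) + 1) * (a + b + (n + 1)))) :=
    scaledHypCoeff_succ hab
  have ht := norm_mul_div_succ_mul_add_succ_le hab
  have hu_le : ∀ n, ‖u n‖ ≤ B := fun n => (norm_le_mul_exp_of_eq_mul_one_add hu ht n).trans <|
    mul_le_mul_of_nonneg_left (Real.exp_le_exp.2 (sub_le_self _ (by positivity))) (norm_nonneg _)
  have hdiff : ∀ n, ‖u (n + 1) - u n‖ ≤ B * w n - B * w (n + 1) := by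
    intro n
    rw [hu, mul_one_add, add_sub_cancel_left, norm_mul, ← mul_sub]
    exact mul_le_mul (hu_le n) (ht n) (norm_nonneg _) (by positivity)
  have hw : Tendsto w atTop (𝓝 0) :=
    ((tendsto_const_div_atTop_nhds_zero_nat (2 * ‖a * b‖)).comp (tendsto_add_atTop_nat 1)).congr
      fun n => by simp [w]
  refine ⟨B * (2 * ‖a * b‖), fun n => ?_⟩
  rw [norm_sub_rev]
  simpa [w, mul_div_assoc] using
    norm_sub_le_of_norm_sub_succ_le hdiff (tendsto_scaledHypCoeff ha hb)
    (by simpa using hw.const_mul B : Tendsto (fun n => B * w n) atTop (𝓝 0)) n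

theorem exists_norm_gaussHyp_add_mul_log_le (ha : ∀ m : ℕ, a ≠ -m) (hb : ∀ m : ℕ, b ≠ -m)
    (hab : 0 ≤ (a + b).re) :
    ∃ C : ℝ, ∀ z : ℂ, ‖z‖ < 1 → ‖gaussHyp a b (a + b) z +
      Complex.Gamma (a + b) / (Complex.Gamma a * Complex.Gamma b) * Complex.log (1 - z)‖ ≤ C := by
  obtain ⟨D, hD⟩ := exists_norm_scaledHypCoeff_sub_le ha hb hab
  refine ⟨1 + D * ∑' n : ℕ, 1 / ((n : ℝ) + 1) ^ 2, fun z hz => ?_⟩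
  simpa [gaussHyp_eq_tsum] using norm_tsum_mul_pow_add_mul_log_le hD hz

end ZeroBalanced

theorem bh_log_singularity_general (m k : ℝ) :
    ∃ C : ℝ, ∀ x ∈ Set.Ico (0 : ℝ) 1,
      ‖gaussHyp (1 / 2 + Complex.I * ((k : ℂ) - (bhOmega m k : ℂ)))
            (1 / 2 - Complex.I * ((k : ℂ) + (bhOmega m k : ℂ)))
            ((1 / 2 + Complex.I * ((k : ℂ) - (bhOmega m k : ℂ)))
              + (1 / 2 - Complex.I * ((k : ℂ) + (bhOmega m k : ℂ)))) (x : ℂ)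
          + Complex.Gamma ((1 / 2 + Complex.I * ((k : ℂ) - (bhOmega m k : ℂ)))
              + (1 / 2 - Complex.I * ((k : ℂ) + (bhOmega m k : ℂ)))) /
            (Complex.Gamma (1 / 2 + Complex.I * ((k : ℂ) - (bhOmega m k : ℂ))) *
              Complex.Gamma (1 / 2 - Complex.I * ((k : ℂ) + (bhOmega m k : ℂ)))) *
            Complex.log (1 - (x : ℂ))‖ ≤ C := by
  set a : ℂ := 1 / 2 + Complex.I * ((k : ℂ) - (bhOmega m k : ℂ))
  set b : ℂ := 1 / 2 - Complex.I * ((k : ℂ) + (bhOmega m k : ℂ))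
  have ha : 0 < a.re := by simp [a]
  have hb : 0 < b.re := by simp [b]
  obtain ⟨C, hC⟩ := exists_norm_gaussHyp_add_mul_log_le (ne_neg_natCast_of_re_pos ha)
    (ne_neg_natCast_of_re_pos hb) (by rw [add_re]; positivity)
  refine ⟨C, fun x hx => hC x ?_⟩
  rw [norm_real, Real.norm_of_nonneg hx.1]
  exact hx.2

/-- with `a = 1/2 + i(k−ω)`, `b = 1/2 − i(k+ω)` (so `a+b = c = 1−2iω`),
the function `x ↦ F(a,b;a+b;x) + (Γ(a+b)/(Γ(a)Γ(b))) log(1−x)` is bounded on `[0,1)`: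
the mode functions have only a logarithmic singularity at `uv = 1`. -/
theorem bh_log_singularity (m k : ℝ) (hm : 0 < m) (hk : 0 < k) :
    ∃ C : ℝ, ∀ x ∈ Set.Ico (0 : ℝ) 1,
      ‖gaussHyp (1 / 2 + Complex.I * ((k : ℂ) - (bhOmega m k : ℂ)))
            (1 / 2 - Complex.I * ((k : ℂ) + (bhOmega m k : ℂ)))
            ((1 / 2 + Complex.I * ((k : ℂ) - (bhOmega m k : ℂ)))
              + (1 / 2 - Complex.I * ((k : ℂ) + (bhOmega m k : ℂ)))) (x : ℂ)
          + Complex.Gamma ((1 / 2 + Complex.I * ((k : ℂ) - (bhOmega m k : ℂ)))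
              + (1 / 2 - Complex.I * ((k : ℂ) + (bhOmega m k : ℂ)))) /
            (Complex.Gamma (1 / 2 + Complex.I * ((k : ℂ) - (bhOmega m k : ℂ))) *
              Complex.Gamma (1 / 2 - Complex.I * ((k : ℂ) + (bhOmega m k : ℂ)))) *
            Complex.log (1 - (x : ℂ))‖ ≤ C :=
  bh_log_singularity_general m k
end

section
/- Let h ∈ (0,1), let ω > 0 be real, and let μ ∈ ℂ. Define the finite-difference second derivative of an entire function a : ℂ → ℂ by (D_t² a)(t) = (a(t + 2πih) − 2a(t) + a(t − 2πih)) / (−4 sin²(πh)). Then the exponential a(t) = e^{−iμt} satisfies D_t² a = −[ω]_h² a (for all t ∈ ℂ) if and only if sinh²(πhμ) = sinh²(πhω), which holds if and only if there exists an integer n such that μ = ω + in/h or μ = −ω + in/h. In particular, besides the oscillatory solutions e^{∓iωt} all other exponential solutions blow up as t → +∞ or t → −∞. -/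
/-!
Shifting `t` by `±2πih` multiplies `e^{-iμt}` by `e^{±2πhμ}`, so the second difference of
`e^{-iμt}` is `4 sinh²(πhμ) e^{-iμt}` and the equation reduces to `sinh²(πhμ) = sinh²(πhω)`.
Since `cosh 2z = 1 + 2 sinh² z`, this is an equality of cosines, whose solutions are
`πhμ = ±πhω + kπi`. Finally `|e^{-iμt}| = e^{(Im μ) t}` with `Im μ = n/h`, which is nonzero
unless `μ = ±ω`.
-/

open Real Complex

namespace Complex

theorem exp_add_sub_two_mul_exp_add_exp_sub (z w : ℂ) :
    exp (z + w) - 2 * exp z + exp (z - w) = 4 * sinh (w / 2) ^ 2 * exp z := by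
  have hcosh : cosh w = 2 * sinh (w / 2) ^ 2 + 1 := by
    have := cosh_two_mul (w / 2)
    rwa [mul_div_cancel₀ w two_ne_zero, cosh_sq, add_right_comm, ← two_mul] at this
  rw [exp_add, sub_eq_add_neg z w, exp_add]
  linear_combination exp z * (two_cosh w).symm + 2 * exp z * hcosh

theorem sinh_sq_eq_sinh_sq_iff {z w : ℂ} :
    sinh z ^ 2 = sinh w ^ 2 ↔ ∃ k : ℤ, z = w + k * π * I ∨ z = -w + k * π * I := by
  have hcosh (u : ℂ) : cos (2 * u * I) = 2 * sinh u ^ 2 + 1 := by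
    rw [cos_mul_I, cosh_two_mul, cosh_sq]; ring
  rw [← mul_right_inj' (two_ne_zero' ℂ), ← add_left_inj 1, ← hcosh, ← hcosh, cos_eq_cos_iff]
  constructor
  · rintro ⟨k, H | H⟩
    · exact ⟨k, Or.inl <| by linear_combination (I / 2) * H + (z - w) * I_sq⟩
    · exact ⟨-k, Or.inr <| by push_cast; linear_combination (-I / 2) * H + (z + w) * I_sq⟩
  · rintro ⟨k, H | H⟩
    · exact ⟨k, Or.inl <| by linear_combination (-2 * I) * H - 2 * k * π * I_sq⟩
    · exact ⟨-k, Or.inr <| by push_cast; linear_combination (2 * I) * H + 2 * k * π * I_sq⟩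

theorem sinh_sq_pi_mul_eq_sinh_sq_pi_mul_iff {h : ℝ} (hh : h ≠ 0) (μ ν : ℂ) :
    sinh ((π * h : ℝ) * μ) ^ 2 = sinh ((π * h : ℝ) * ν) ^ 2 ↔
      ∃ n : ℤ, μ = ν + I * (n / h) ∨ μ = -ν + I * (n / h) := by
  have hπh : ((π * h : ℝ) : ℂ) ≠ 0 := ofReal_ne_zero.2 (mul_ne_zero pi_ne_zero hh)
  have hshift (n : ℤ) (s : ℂ) :
      ((π * h : ℝ) : ℂ) * (s + I * (n / h)) = (π * h : ℝ) * s + n * π * I := by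
    have : (h : ℂ) ≠ 0 := ofReal_ne_zero.2 hh
    push_cast; field_simp
  rw [sinh_sq_eq_sinh_sq_iff]
  refine exists_congr fun n => or_congr ?_ ?_
  · rw [← hshift, mul_right_inj' hπh]
  · rw [← mul_neg, ← hshift, mul_right_inj' hπh]

theorem norm_exp_neg_I_mul_ofReal (μ : ℂ) (t : ℝ) :
    ‖exp (-I * μ * t)‖ = Real.exp (μ.im * t) := by
  rw [norm_exp]; simp

theorem tendsto_norm_exp_neg_I_mul_ofReal {μ : ℂ} (hμ : μ.im ≠ 0) :
    Filter.Tendsto (fun t : ℝ => ‖exp (-I * μ * t)‖) Filter.atTop Filter.atTop ∨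
      Filter.Tendsto (fun t : ℝ => ‖exp (-I * μ * t)‖) Filter.atBot Filter.atTop := by
  simp_rw [norm_exp_neg_I_mul_ofReal]
  rcases hμ.lt_or_gt with hneg | hpos
  · exact .inr <| tendsto_exp_atTop.comp <| Filter.tendsto_id.const_mul_atBot_of_neg hneg
  · exact .inl <| tendsto_exp_atTop.comp <| Filter.tendsto_id.const_mul_atTop hpos

end Complex

theorem deformed_time_equation_solutions_general (h : ℝ) (hh : h ∈ Set.Ioo (0 : ℝ) 1)
    (ω : ℝ) (μ : ℂ) :
    ((∀ t : ℂ,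
        (Complex.exp (-Complex.I * μ * (t + 2 * (π : ℂ) * (h : ℂ) * Complex.I))
            - 2 * Complex.exp (-Complex.I * μ * t)
            + Complex.exp (-Complex.I * μ * (t - 2 * (π : ℂ) * (h : ℂ) * Complex.I))) /
          (-(4 * ((Real.sin (π * h) : ℝ) : ℂ) ^ 2))
        = -(((Real.sinh (π * h * ω) / Real.sin (π * h) : ℝ) : ℂ)) ^ 2 *
            Complex.exp (-Complex.I * μ * t))
      ↔ Complex.sinh ((π * h : ℝ) * μ) ^ 2 = ((Real.sinh (π * h * ω) : ℝ) : ℂ) ^ 2) ∧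
    (Complex.sinh ((π * h : ℝ) * μ) ^ 2 = ((Real.sinh (π * h * ω) : ℝ) : ℂ) ^ 2
      ↔ ∃ n : ℤ, μ = (ω : ℂ) + Complex.I * ((n : ℂ) / (h : ℂ))
          ∨ μ = -(ω : ℂ) + Complex.I * ((n : ℂ) / (h : ℂ))) ∧
    ((Complex.sinh ((π * h : ℝ) * μ) ^ 2 = ((Real.sinh (π * h * ω) : ℝ) : ℂ) ^ 2
        ∧ μ ≠ (ω : ℂ) ∧ μ ≠ -(ω : ℂ)) →
      (Filter.Tendsto (fun t : ℝ => ‖Complex.exp (-Complex.I * μ * (t : ℂ))‖)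
          Filter.atTop Filter.atTop
        ∨ Filter.Tendsto (fun t : ℝ => ‖Complex.exp (-Complex.I * μ * (t : ℂ))‖)
            Filter.atBot Filter.atTop)) := by
  obtain ⟨hh0, hh1⟩ := hh
  have hsin : ((Real.sin (π * h) : ℝ) : ℂ) ≠ 0 := ofReal_ne_zero.2
    (Real.sin_pos_of_pos_of_lt_pi (by positivity) (by nlinarith [pi_pos])).ne'
  have hroots : Complex.sinh ((π * h : ℝ) * μ) ^ 2 = ((Real.sinh (π * h * ω) : ℝ) : ℂ) ^ 2
      ↔ ∃ n : ℤ, μ = ω + I * (n / h) ∨ μ = -ω + I * (n / h) := by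
    rw [ofReal_sinh, ofReal_mul (π * h)]
    exact sinh_sq_pi_mul_eq_sinh_sq_pi_mul_iff hh0.ne' μ ω
  have hpoint (t : ℂ) :
      (exp (-I * μ * (t + 2 * π * h * I)) - 2 * exp (-I * μ * t)
          + exp (-I * μ * (t - 2 * π * h * I))) / -(4 * ((Real.sin (π * h) : ℝ) : ℂ) ^ 2)
        = -(((Real.sinh (π * h * ω) / Real.sin (π * h) : ℝ) : ℂ)) ^ 2 * exp (-I * μ * t)
      ↔ Complex.sinh ((π * h : ℝ) * μ) ^ 2 = ((Real.sinh (π * h * ω) : ℝ) : ℂ) ^ 2 := by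
    have hshift : -I * μ * (2 * π * h * I) = 2 * ((π * h : ℝ) * μ) := by
      push_cast; linear_combination (-2 * π * h * μ) * I_sq
    rw [mul_add, mul_sub, hshift, exp_add_sub_two_mul_exp_add_exp_sub,
      mul_div_cancel_left₀ _ two_ne_zero, ofReal_div]
    field_simp
    exact neg_inj
  refine ⟨by simp only [hpoint, forall_const], hroots, ?_⟩
  rintro ⟨hS, hμω, hμω'⟩
  obtain ⟨n, hn⟩ := hroots.1 hS
  have hn0 : n ≠ 0 := by
    rintro rfl
    simp_all
  apply tendsto_norm_exp_neg_I_mul_ofReal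
  have him : μ.im = n / h := by
    rcases hn with rfl | rfl <;> simp
  rw [him]
  exact div_ne_zero (Int.cast_ne_zero.2 hn0) hh0.ne'

/-- the exponential `a(t) = e^{−iμt}` solves the finite-difference
equation `D_t² a = −[ω]_h² a` iff `sinh²(πhμ) = sinh²(πhω)` iff `μ = ±ω + in/h` for some
integer `n`; moreover every non-oscillatory exponential solution (`μ ≠ ±ω`) blows up as
`t → +∞` or as `t → −∞`. -/
theorem deformed_time_equation_solutions (h : ℝ) (hh : h ∈ Set.Ioo (0 : ℝ) 1)
    (ω : ℝ) (hω : 0 < ω) (μ : ℂ) :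
    ((∀ t : ℂ,
        (Complex.exp (-Complex.I * μ * (t + 2 * (π : ℂ) * (h : ℂ) * Complex.I))
            - 2 * Complex.exp (-Complex.I * μ * t)
            + Complex.exp (-Complex.I * μ * (t - 2 * (π : ℂ) * (h : ℂ) * Complex.I))) /
          (-(4 * ((Real.sin (π * h) : ℝ) : ℂ) ^ 2))
        = -(((Real.sinh (π * h * ω) / Real.sin (π * h) : ℝ) : ℂ)) ^ 2 *
            Complex.exp (-Complex.I * μ * t))
      ↔ Complex.sinh ((π * h : ℝ) * μ) ^ 2 = ((Real.sinh (π * h * ω) : ℝ) : ℂ) ^ 2) ∧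
    (Complex.sinh ((π * h : ℝ) * μ) ^ 2 = ((Real.sinh (π * h * ω) : ℝ) : ℂ) ^ 2
      ↔ ∃ n : ℤ, μ = (ω : ℂ) + Complex.I * ((n : ℂ) / (h : ℂ))
          ∨ μ = -(ω : ℂ) + Complex.I * ((n : ℂ) / (h : ℂ))) ∧
    ((Complex.sinh ((π * h : ℝ) * μ) ^ 2 = ((Real.sinh (π * h * ω) : ℝ) : ℂ) ^ 2
        ∧ μ ≠ (ω : ℂ) ∧ μ ≠ -(ω : ℂ)) →
      (Filter.Tendsto (fun t : ℝ => ‖Complex.exp (-Complex.I * μ * (t : ℂ))‖)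
          Filter.atTop Filter.atTop
        ∨ Filter.Tendsto (fun t : ℝ => ‖Complex.exp (-Complex.I * μ * (t : ℂ))‖)
            Filter.atBot Filter.atTop)) :=
  deformed_time_equation_solutions_general h hh ω μ
end
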